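/- Fix α ∈ (0, ᾱ). For every f ∈ C([0,T]:B_α), the map x ↦ I_x(f) from B_α to [0,∞] is lower semicontinuous with respect to the norm ‖·‖_α. -/

import Mathlib

open MeasureTheory Filter Set Topology
open scoped ENNReal NNReal

noncomputable section

/-- Euclidean space `ℝ^d`. -/
abbrev Euc (d : ℕ) := EuclideanSpace ℝ (Fin d)

/-- The (extended-real-valued) `α`-Hölder norm of `ψ` on `O`:
`sup_{r∈O} |ψ r| + sup_{r,q∈O} |ψ r - ψ q| / |r-q|^α`. -/
def hNorm {d : ℕ} (O : Set (Euc d)) (α : ℝ) (ψ : Euc d → ℝ) : ℝ≥0∞ :=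
  (⨆ r : O, (‖ψ r‖₊ : ℝ≥0∞)) +
    ⨆ p : O × O,
      (‖ψ p.1 - ψ p.2‖₊ : ℝ≥0∞) / edist (p.1 : Euc d) (p.2 : Euc d) ^ α

/-- `f` is an element of `C([0,T] : B_α)`: every `f t`, `t ∈ [0,T]`, has finite
`α`-Hölder norm on `O`, and `t ↦ f t` is continuous in the Hölder norm. -/
def MemCB {d : ℕ} (O : Set (Euc d)) (α T : ℝ) (f : ℝ → Euc d → ℝ) : Prop :=
  (∀ t ∈ Icc (0:ℝ) T, hNorm O α (f t) ≠ ⊤) ∧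
    ∀ t ∈ Icc (0:ℝ) T, ∀ ε : ℝ≥0∞, 0 < ε → ∃ δ : ℝ, 0 < δ ∧
      ∀ s ∈ Icc (0:ℝ) T, |s - t| < δ →
        hNorm O α (fun r => f s r - f t r) < ε

/-- The distance in `C([0,T] : B_α)`: `sup_{t∈[0,T]} ‖f t - g t‖_α`. -/
def distCB {d : ℕ} (O : Set (Euc d)) (α T : ℝ) (f g : ℝ → Euc d → ℝ) : ℝ≥0∞ :=
  ⨆ t : Icc (0:ℝ) T, hNorm O α (fun r => f t r - g t r)

/-- `u ∈ L²([0,T] × O)`. -/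
def MemL2 {d : ℕ} (O : Set (Euc d)) (T : ℝ) (u : ℝ → Euc d → ℝ) : Prop :=
  MemLp (fun p : ℝ × Euc d => u p.1 p.2) 2
    (((volume : Measure ℝ).restrict (Icc (0:ℝ) T)).prod
      ((volume : Measure (Euc d)).restrict O))

/-- `∫_{[0,T]×O} u²`, as an extended real. -/
def energy {d : ℕ} (O : Set (Euc d)) (T : ℝ) (u : ℝ → Euc d → ℝ) : ℝ≥0∞ :=
  ∫⁻ s in Icc (0:ℝ) T, ∫⁻ q in O, (‖u s q‖₊ : ℝ≥0∞) ^ 2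

/-- `f` solves the controlled equation (CE) with data `(x, u)`:
`f(t,r) = ∫_O G(t,0,r,q) x(q) dq + ∫₀^t∫_O G(t,s,r,q) R(s,q,f(s,q)) dq ds
        + ∫₀^t∫_O G(t,s,r,q) F(s,q,f(s,q)) u(s,q) dq ds` on `[0,T] × O`. -/
def SolvesCE {d : ℕ} (O : Set (Euc d)) (T : ℝ)
    (G : ℝ → ℝ → Euc d → Euc d → ℝ) (R F : ℝ → Euc d → ℝ → ℝ)
    (x : Euc d → ℝ) (u : ℝ → Euc d → ℝ) (f : ℝ → Euc d → ℝ) : Prop :=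
  ∀ t ∈ Icc (0:ℝ) T, ∀ r ∈ O,
    f t r = (∫ q in O, G t 0 r q * x q) +
      (∫ s in Icc (0:ℝ) t, ∫ q in O, G t s r q * R s q (f s q)) +
      (∫ s in Icc (0:ℝ) t, ∫ q in O, G t s r q * F s q (f s q) * u s q)

/-- The rate function `I_x(f)`: the infimum of `(1/2)∫_{[0,T]×O} u²` over all
`u ∈ L²([0,T]×O)` such that `f` solves (CE) with data `(x,u)`. -/
def rateI {d : ℕ} (O : Set (Euc d)) (T : ℝ)
    (G : ℝ → ℝ → Euc d → Euc d → ℝ) (R F : ℝ → Euc d → ℝ → ℝ)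
    (x : Euc d → ℝ) (f : ℝ → Euc d → ℝ) : ℝ≥0∞ :=
  sInf {c : ℝ≥0∞ | ∃ u : ℝ → Euc d → ℝ, MemL2 O T u ∧
    SolvesCE O T G R F x u f ∧ c = 2⁻¹ * energy O T u}

/-!
Controls of nearly optimal cost for the data `xₙ` are bounded in `L²([0,T] × O)`, so by
Banach–Alaoglu they have a weak cluster point `v`, whose cost is no larger. The control enters
(CE) only through the inner product with `(s,q) ↦ G(t,s,r,q) F(s,q,f(s,q))`, which lies in `L²`
because `F(·,·,f)` is bounded and `∫_O |G(t,s,r,q)|² dq ≤ K² (t-s)^{-d/γ}` is integrable in `s`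
(by (G1), (G2) and `d < γ`). The initial-data terms converge by (A2), so (CE) passes to the
cluster point: `f` solves (CE) with data `(x, v)`.
-/

section HolderNorm

variable {d : ℕ} {O : Set (Euc d)} {α : ℝ}

lemma hNorm_sub_comm (ψ χ : Euc d → ℝ) :
    hNorm O α (fun r => ψ r - χ r) = hNorm O α (fun r => χ r - ψ r) := by
  unfold hNorm
  congr 1
  · exact iSup_congr fun r => by rw [← nnnorm_neg, neg_sub]
  · exact iSup_congr fun p => by rw [← nnnorm_neg]; ring_nf

lemma nnnorm_le_hNorm (ψ : Euc d → ℝ) {r : Euc d} (hr : r ∈ O) :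
    (‖ψ r‖₊ : ℝ≥0∞) ≤ hNorm O α ψ :=
  (le_iSup (fun r : O => (‖ψ r‖₊ : ℝ≥0∞)) ⟨r, hr⟩).trans le_self_add

lemma abs_le_toReal_hNorm {ψ : Euc d → ℝ} (hψ : hNorm O α ψ ≠ ⊤) {r : Euc d} (hr : r ∈ O) :
    |ψ r| ≤ (hNorm O α ψ).toReal := by
  simpa using ENNReal.toReal_mono hψ (nnnorm_le_hNorm (α := α) ψ hr)

lemma hNorm_le_hNorm_sub_add (ψ χ : Euc d → ℝ) :
    hNorm O α ψ ≤ hNorm O α (fun r => ψ r - χ r) + hNorm O α χ := by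
  have key : ∀ a b : ℝ, (‖a‖₊ : ℝ≥0∞) ≤ ‖a - b‖₊ + ‖b‖₊ := fun a b => by
    exact_mod_cast (sub_add_cancel a b ▸ nnnorm_add_le (a - b) b :)
  unfold hNorm
  refine (add_le_add (iSup_le fun r => ?_) (iSup_le fun p => ?_)).trans
    (add_add_add_comm _ _ _ _).le
  · exact (key _ (χ r)).trans (add_le_add (le_iSup_of_le r le_rfl) (le_iSup_of_le r le_rfl))
  · calc _ ≤ ((‖(ψ p.1 - χ p.1) - (ψ p.2 - χ p.2)‖₊ : ℝ≥0∞) + ‖χ p.1 - χ p.2‖₊)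
            / edist (p.1 : Euc d) p.2 ^ α := by
          gcongr
          have h := key (ψ p.1 - ψ p.2) (χ p.1 - χ p.2)
          rwa [sub_sub_sub_comm] at h
      _ = _ := ENNReal.add_div
      _ ≤ _ := add_le_add (le_iSup_of_le p le_rfl) (le_iSup_of_le p le_rfl)

lemma holderOnWith_hNorm (hα : 0 ≤ α) {ψ : Euc d → ℝ} (hψ : hNorm O α ψ ≠ ⊤) :
    HolderOnWith (hNorm O α ψ).toNNReal α.toNNReal ψ O := by
  intro r hr q hq
  rw [ENNReal.coe_toNNReal hψ, Real.coe_toNNReal _ hα, edist_eq_enorm_sub,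
    ← ENNReal.div_le_iff_le_mul (Or.inr hψ)
      (Or.inl (ENNReal.rpow_ne_top_of_nonneg hα (edist_ne_top r q)))]
  exact (le_iSup (fun p : O × O => (‖ψ p.1 - ψ p.2‖₊ : ℝ≥0∞) / edist (p.1 : Euc d) p.2 ^ α)
    ⟨⟨r, hr⟩, ⟨q, hq⟩⟩).trans le_add_self

end HolderNorm

def spaceTimeMeasure {d : ℕ} (O : Set (Euc d)) (T : ℝ) : Measure (ℝ × Euc d) :=
  ((volume : Measure ℝ).restrict (Icc (0:ℝ) T)).prod ((volume : Measure (Euc d)).restrict O)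

namespace MemCB

variable {d : ℕ} {O : Set (Euc d)} {α T : ℝ} {f : ℝ → Euc d → ℝ}

lemma exists_abs_le (hf : MemCB O α T f) : ∃ M, ∀ t ∈ Icc (0:ℝ) T, ∀ q ∈ O, |f t q| ≤ M := by
  choose! δ hδ hclose using hf.2
  obtain ⟨s, hs, hcover⟩ := isCompact_Icc.elim_nhds_subcover (fun t => Metric.ball t (δ t 1))
    fun t ht => Metric.ball_mem_nhds _ (hδ t ht 1 one_pos)
  set M : ℝ≥0∞ := 1 + s.sup fun t => hNorm O α (f t)
  have hM : M ≠ ⊤ := ENNReal.add_ne_top.2 ⟨ENNReal.one_ne_top,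
    (Finset.sup_lt_iff ENNReal.zero_lt_top).2 (fun t ht => (hf.1 t (hs t ht)).lt_top) |>.ne⟩
  refine ⟨M.toReal, fun t ht q hq => ?_⟩
  obtain ⟨t₀, ht₀, htt₀⟩ := mem_iUnion₂.1 (hcover ht)
  have hle : hNorm O α (f t) ≤ M :=
    calc hNorm O α (f t) ≤ hNorm O α (fun r => f t r - f t₀ r) + hNorm O α (f t₀) :=
          hNorm_le_hNorm_sub_add _ _
      _ ≤ M := add_le_add (hclose t₀ (hs t₀ ht₀) 1 one_pos t ht htt₀).le
          (Finset.le_sup (f := fun t => hNorm O α (f t)) ht₀)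
  exact (abs_le_toReal_hNorm (ne_top_of_le_ne_top hM hle) hq).trans (ENNReal.toReal_mono hM hle)

lemma continuousOn_uncurry (hα : 0 < α) (hf : MemCB O α T f) :
    ContinuousOn (fun p : ℝ × Euc d => f p.1 p.2) (Icc 0 T ×ˢ O) := by
  rw [Metric.continuousOn_iff]
  rintro ⟨t, q₀⟩ ⟨ht, hq₀⟩ ε hε
  obtain ⟨δ₁, hδ₁, htime⟩ := hf.2 t ht (ENNReal.ofReal (ε / 2)) (by simpa using hε)
  obtain ⟨δ₂, hδ₂, hspace⟩ := Metric.continuousOn_iff.1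
    ((holderOnWith_hNorm hα.le (hf.1 t ht)).continuousOn (Real.toNNReal_pos.2 hα)) q₀ hq₀
    (ε / 2) (half_pos hε)
  refine ⟨min δ₁ δ₂, lt_min hδ₁ hδ₂, ?_⟩
  rintro ⟨s, q⟩ ⟨hs, hq⟩ hdist
  rw [Prod.dist_eq, max_lt_iff, lt_min_iff, lt_min_iff] at hdist
  have hclose := htime s hs (by rw [← Real.dist_eq]; exact hdist.1.1)
  have h₁ : |f s q - f t q| < ε / 2 :=
    (abs_le_toReal_hNorm (hclose.trans ENNReal.ofReal_lt_top).ne hq).trans_lt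
      (ENNReal.toReal_lt_of_lt_ofReal hclose)
  have h₂ : dist (f t q) (f t q₀) < ε / 2 := hspace q hq hdist.2.2
  calc dist (f s q) (f t q₀) ≤ dist (f s q) (f t q) + dist (f t q) (f t q₀) := dist_triangle _ _ _
    _ < ε := by rw [Real.dist_eq]; linarith

lemma aestronglyMeasurable_uncurry (hO : MeasurableSet O) (hα : 0 < α) (hf : MemCB O α T f) :
    AEStronglyMeasurable (fun p : ℝ × Euc d => f p.1 p.2) (spaceTimeMeasure O T) := by
  rw [spaceTimeMeasure, Measure.prod_restrict]
  exact (hf.continuousOn_uncurry hα).aestronglyMeasurable (measurableSet_Icc.prod hO)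

lemma exists_abs_comp_le (hf : MemCB O α T f) {K : ℝ} (hK : 0 ≤ K) {F : ℝ → Euc d → ℝ → ℝ}
    (hF : ∀ t ∈ Icc (0:ℝ) T, ∀ r ∈ O, ∀ y : ℝ, |F t r y| ≤ K * (1 + |y|)) :
    ∃ B, ∀ s ∈ Icc (0:ℝ) T, ∀ q ∈ O, |F s q (f s q)| ≤ B := by
  obtain ⟨M, hM⟩ := hf.exists_abs_le
  exact ⟨K * (1 + M), fun s hs q hq => (hF s hs q hq (f s q)).trans (by gcongr; exact hM s hs q hq)⟩

lemma aestronglyMeasurable_comp (hO : MeasurableSet O) (hα : 0 < α) (hf : MemCB O α T f)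
    {F : ℝ → Euc d → ℝ → ℝ} (hF : Measurable fun p : ℝ × Euc d × ℝ => F p.1 p.2.1 p.2.2) :
    AEStronglyMeasurable (fun p : ℝ × Euc d => F p.1 p.2 (f p.1 p.2)) (spaceTimeMeasure O T) :=
  (hF.comp_aemeasurable (measurable_fst.aemeasurable.prodMk (measurable_snd.aemeasurable.prodMk
    (hf.aestronglyMeasurable_uncurry hO hα).aemeasurable))).aestronglyMeasurable

end MemCB

lemma lintegral_rpow_sub_lt_top {t e : ℝ} (he : -1 < e) :
    ∫⁻ s in Icc 0 t, ENNReal.ofReal ((t - s) ^ e) < ⊤ := by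
  rcases lt_or_ge t 0 with ht | ht
  · simp [Icc_eq_empty (not_le.2 ht)]
  have hint : IntervalIntegrable (fun s : ℝ => (t - s) ^ e) volume 0 t := by
    simpa using ((intervalIntegral.intervalIntegrable_rpow' (a := 0) (b := t) he).comp_sub_left
      t).symm
  rw [intervalIntegrable_iff_integrableOn_Icc_of_le ht] at hint
  exact (lintegral_mono fun s => Real.ofReal_le_enorm _).trans_lt hint.2

lemma setLIntegral_enorm_mul_sq_le {X : Type*} [MeasurableSpace X] {μ : Measure X} {s : Set X}
    (hs : MeasurableSet s) {h φ : X → ℝ} {A B : ℝ≥0∞} (hAB : A * B ^ 2 ≠ ⊤)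
    (hA : ∀ q ∈ s, ‖h q‖ₑ ≤ A) (hB : ∀ q ∈ s, ‖φ q‖ₑ ≤ B) :
    ∫⁻ q in s, ‖h q * φ q‖ₑ ^ 2 ∂μ ≤ A * B ^ 2 * ∫⁻ q in s, ‖h q‖ₑ ∂μ := by
  rw [← lintegral_const_mul' _ _ hAB]
  refine setLIntegral_mono' hs fun q hq => ?_
  calc ‖h q * φ q‖ₑ ^ 2 = ‖h q‖ₑ * ‖φ q‖ₑ ^ 2 * ‖h q‖ₑ := by rw [enorm_mul]; ring
    _ ≤ A * B ^ 2 * ‖h q‖ₑ := by gcongr; exacts [hA q hq, hB q hq]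

lemma enorm_le_ofReal_of_abs_le {a b : ℝ} (h : |a| ≤ b) : ‖a‖ₑ ≤ ENNReal.ofReal b := by
  rw [Real.enorm_eq_ofReal_abs]
  exact ENNReal.ofReal_le_ofReal h

section Kernel

variable {d : ℕ} {O : Set (Euc d)} {T K γ : ℝ} {G : ℝ → ℝ → Euc d → Euc d → ℝ}

lemma memLp_kernel_mul (hO : MeasurableSet O) (hK : 0 ≤ K) (hγ : (d : ℝ) < γ)
    (hGmeas : Measurable fun p : (ℝ × ℝ) × Euc d × Euc d => G p.1.1 p.1.2 p.2.1 p.2.2)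
    (hGzero : ∀ t s : ℝ, t ≤ s → ∀ r q : Euc d, G t s r q = 0)
    (hG1 : ∀ t ∈ Icc (0:ℝ) T, ∀ s ∈ Icc (0:ℝ) T, ∀ r ∈ O,
      (∫⁻ q in O, (‖G t s r q‖₊ : ℝ≥0∞)) ≤ ENNReal.ofReal K)
    (hG2 : ∀ s t : ℝ, 0 ≤ s → s < t → t ≤ T → ∀ r ∈ O, ∀ q ∈ O,
      |G t s r q| ≤ K * (t - s) ^ (-(d : ℝ) / γ))
    {φ : ℝ × Euc d → ℝ} (hφm : AEStronglyMeasurable φ (spaceTimeMeasure O T))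
    {B : ℝ} (hφ : ∀ s ∈ Icc (0:ℝ) T, ∀ q ∈ O, |φ (s, q)| ≤ B)
    {t : ℝ} (ht : t ∈ Icc (0:ℝ) T) {r : Euc d} (hr : r ∈ O) :
    MemLp (fun p : ℝ × Euc d => G t p.1 r p.2 * φ p) 2 (spaceTimeMeasure O T) := by
  have he : -1 < -(d : ℝ) / γ := by
    rw [neg_div, neg_lt_neg_iff, div_lt_one ((Nat.cast_nonneg d).trans_lt hγ)]
    exact hγ
  have hmeas : AEStronglyMeasurable (fun p : ℝ × Euc d => G t p.1 r p.2 * φ p)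
      (spaceTimeMeasure O T) :=
    (hGmeas.comp ((measurable_const.prodMk measurable_fst).prodMk
      (measurable_const.prodMk measurable_snd))).aestronglyMeasurable.mul hφm
  refine ⟨hmeas, (eLpNorm_lt_top_iff_lintegral_rpow_enorm_lt_top two_ne_zero
    ENNReal.ofNat_ne_top).2 ?_⟩
  set D := ENNReal.ofReal K * ENNReal.ofReal B ^ 2 * ENNReal.ofReal K
  have hD : D ≠ ⊤ := by finiteness
  have hslice : ∀ s ∈ Icc (0:ℝ) T, ∫⁻ q in O, ‖G t s r q * φ (s, q)‖ₑ ^ 2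
      ≤ D * (Icc 0 t).indicator (fun s => ENNReal.ofReal ((t - s) ^ (-(d : ℝ) / γ))) s := by
    intro s hs
    rcases le_or_gt t s with hts | hst
    · simp [hGzero t s hts]
    rw [indicator_of_mem (show s ∈ Icc 0 t from ⟨hs.1, hst.le⟩)]
    calc ∫⁻ q in O, ‖G t s r q * φ (s, q)‖ₑ ^ 2
        ≤ ENNReal.ofReal (K * (t - s) ^ (-(d : ℝ) / γ)) * ENNReal.ofReal B ^ 2
            * ∫⁻ q in O, ‖G t s r q‖ₑ :=
          setLIntegral_enorm_mul_sq_le hO (by finiteness)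
            (fun q hq => enorm_le_ofReal_of_abs_le (hG2 s t hs.1 hst ht.2 r hr q hq))
            (fun q hq => enorm_le_ofReal_of_abs_le (hφ s hs q hq))
      _ ≤ ENNReal.ofReal (K * (t - s) ^ (-(d : ℝ) / γ)) * ENNReal.ofReal B ^ 2
            * ENNReal.ofReal K := by gcongr; exact hG1 t ht s hs r hr
      _ = _ := by rw [ENNReal.ofReal_mul hK]; ring
  simp only [ENNReal.toReal_ofNat, ENNReal.rpow_two]
  rw [spaceTimeMeasure, lintegral_prod _ (hmeas.aemeasurable.enorm.pow_const 2)]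
  calc ∫⁻ s in Icc 0 T, ∫⁻ q in O, ‖G t s r q * φ (s, q)‖ₑ ^ 2
      ≤ ∫⁻ s in Icc 0 T,
          D * (Icc 0 t).indicator (fun s => ENNReal.ofReal ((t - s) ^ (-(d : ℝ) / γ))) s :=
        setLIntegral_mono' measurableSet_Icc hslice
    _ = D * ∫⁻ s in Icc 0 t, ENNReal.ofReal ((t - s) ^ (-(d : ℝ) / γ)) := by
        rw [lintegral_const_mul' _ _ hD, lintegral_indicator measurableSet_Icc,
          Measure.restrict_restrict measurableSet_Icc,
          inter_eq_self_of_subset_left (Icc_subset_Icc le_rfl ht.2)]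
    _ < ⊤ := ENNReal.mul_lt_top hD.lt_top (lintegral_rpow_sub_lt_top he)

end Kernel

section SpaceTimeL2

variable {d : ℕ} {O : Set (Euc d)} {T : ℝ}

lemma MemL2.memLp {u : ℝ → Euc d → ℝ} (hu : MemL2 O T u) :
    MemLp (fun p : ℝ × Euc d => u p.1 p.2) 2 (spaceTimeMeasure O T) :=
  hu

lemma inner_toLp_eq_setIntegral_setIntegral {t : ℝ} (ht : t ∈ Icc (0:ℝ) T) {g : ℝ × Euc d → ℝ}
    (hg : MemLp g 2 (spaceTimeMeasure O T)) (hgz : ∀ s, t ≤ s → ∀ q, g (s, q) = 0)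
    (V : Lp ℝ 2 (spaceTimeMeasure O T)) :
    inner ℝ (hg.toLp g) V = ∫ s in Icc (0:ℝ) t, ∫ q in O, g (s, q) * V (s, q) := by
  have hprod : inner ℝ (hg.toLp g) V = ∫ p, g p * V p ∂spaceTimeMeasure O T := by
    rw [L2.inner_def]
    refine integral_congr_ae ?_
    filter_upwards [hg.coeFn_toLp] with p hp
    simp [hp, mul_comm]
  have hint : Integrable (fun p => g p * V p) (spaceTimeMeasure O T) :=
    (L2.integrable_inner (𝕜 := ℝ) (hg.toLp g) V).congr (by
      filter_upwards [hg.coeFn_toLp] with p hp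
      simp [hp, mul_comm])
  calc inner ℝ (hg.toLp g) V = ∫ p, g p * V p ∂spaceTimeMeasure O T := hprod
    _ = ∫ s in Icc (0:ℝ) T, ∫ q in O, g (s, q) * V (s, q) := integral_prod _ hint
    _ = _ := setIntegral_eq_of_subset_of_forall_sdiff_eq_zero measurableSet_Icc
        (Icc_subset_Icc le_rfl ht.2) fun s hs => by
          have hts : t ≤ s := le_of_lt (not_le.1 fun h => hs.2 ⟨hs.1.1, h⟩)
          simp [hgz s hts]

lemma setIntegral_setIntegral_mul_congr_ae {t : ℝ} (htT : t ≤ T) (h u : ℝ → Euc d → ℝ)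
    {v : ℝ × Euc d → ℝ} (hv : (fun p : ℝ × Euc d => u p.1 p.2) =ᵐ[spaceTimeMeasure O T] v) :
    ∫ s in Icc (0:ℝ) t, ∫ q in O, h s q * u s q
      = ∫ s in Icc (0:ℝ) t, ∫ q in O, h s q * v (s, q) := by
  have hslices := ae_restrict_of_ae_restrict_of_subset (Icc_subset_Icc le_rfl htT)
    (Measure.ae_ae_of_ae_prod hv)
  refine integral_congr_ae ?_
  filter_upwards [hslices] with s hs
  refine integral_congr_ae ?_
  filter_upwards [hs] with q hq
  rw [hq]

lemma energy_eq_eLpNorm_sq {u : ℝ → Euc d → ℝ}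
    (hu : AEStronglyMeasurable (fun p : ℝ × Euc d => u p.1 p.2) (spaceTimeMeasure O T)) :
    energy O T u = eLpNorm (fun p : ℝ × Euc d => u p.1 p.2) 2 (spaceTimeMeasure O T) ^ 2 := by
  have h := eLpNorm_nnreal_pow_eq_lintegral (f := fun p : ℝ × Euc d => u p.1 p.2)
    (μ := spaceTimeMeasure O T) (p := 2) two_ne_zero
  simp only [ENNReal.coe_ofNat, NNReal.coe_ofNat, ENNReal.rpow_two] at h
  rw [h, spaceTimeMeasure, lintegral_prod _ (hu.aemeasurable.enorm.pow_const 2)]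
  rfl

lemma energy_eq_ofReal_norm_toLp_sq {u : ℝ → Euc d → ℝ}
    (hu : MemLp (fun p : ℝ × Euc d => u p.1 p.2) 2 (spaceTimeMeasure O T)) :
    energy O T u = ENNReal.ofReal ‖hu.toLp _‖ ^ 2 := by
  rw [energy_eq_eLpNorm_sq hu.1, Lp.norm_toLp, ENNReal.ofReal_toReal hu.eLpNorm_ne_top]

lemma energy_coeFn_eq (v : Lp ℝ 2 (spaceTimeMeasure O T)) :
    energy O T (fun s q => v (s, q)) = ENNReal.ofReal ‖v‖ ^ 2 := by
  rw [energy_eq_ofReal_norm_toLp_sq (Lp.memLp v), Lp.toLp_coeFn]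

end SpaceTimeL2

lemma inv_two_mul_ofReal_sq_le_iff {a : ℝ} (ha : 0 ≤ a) {c : ℝ≥0∞} (hc : c ≠ ⊤) :
    2⁻¹ * ENNReal.ofReal a ^ 2 ≤ c ↔ a ≤ √(2 * c).toReal := by
  rw [ENNReal.inv_mul_le_iff two_ne_zero ENNReal.ofNat_ne_top, ← ENNReal.ofReal_pow ha,
    ENNReal.ofReal_le_iff_le_toReal (by finiteness), Real.le_sqrt ha ENNReal.toReal_nonneg]

theorem exists_mapClusterPt_inner_of_norm_le {E : Type*} [NormedAddCommGroup E]
    [InnerProductSpace ℝ E] [CompleteSpace E] {ι : Type*} {l : Filter ι} [l.NeBot]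
    {u : ι → E} {C : ℝ} (hu : ∀ i, ‖u i‖ ≤ C) :
    ∃ v : E, ‖v‖ ≤ C ∧ ∀ g : E, MapClusterPt (inner ℝ v g) l (fun i => inner ℝ (u i) g) := by
  set w : ι → WeakDual ℝ E := fun i => StrongDual.toWeakDual (InnerProductSpace.toDual ℝ E (u i))
  have hw : ∀ i, w i ∈ WeakDual.toStrongDual ⁻¹' Metric.closedBall 0 C := fun i => by
    simpa [w] using hu i
  obtain ⟨ℓ, hℓ, hcluster⟩ :=
    (WeakDual.isCompact_closedBall (𝕜 := ℝ) (0 : StrongDual ℝ E) C).exists_clusterPt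
      (f := map w l) (le_principal_iff.2 (mem_map.2 (Eventually.of_forall hw)))
  refine ⟨(InnerProductSpace.toDual ℝ E).symm (WeakDual.toStrongDual ℓ), by simpa using hℓ,
    fun g => ?_⟩
  rw [InnerProductSpace.toDual_symm_apply]
  exact (show MapClusterPt ℓ l w from hcluster).continuousAt_comp
    (WeakDual.eval_continuous g).continuousAt

section ControlledEquation

variable {d : ℕ} {O : Set (Euc d)} {α T : ℝ}

lemma tendsto_apply_of_distCB_continuousAt {ι : Type*} {l : Filter ι}
    {S : (Euc d → ℝ) → ℝ → Euc d → ℝ} {x : Euc d → ℝ}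
    (hS : ∀ ε : ℝ≥0∞, 0 < ε → ∃ δ : ℝ≥0∞, 0 < δ ∧ ∀ ξ : Euc d → ℝ, hNorm O α ξ ≠ ⊤ →
      hNorm O α (fun r => x r - ξ r) < δ → distCB O α T (S x) (S ξ) < ε)
    {xs : ι → Euc d → ℝ} (hxs : ∀ i, hNorm O α (xs i) ≠ ⊤)
    (hconv : Tendsto (fun i => hNorm O α (fun r => xs i r - x r)) l (𝓝 0))
    {t : ℝ} (ht : t ∈ Icc (0:ℝ) T) {r : Euc d} (hr : r ∈ O) :
    Tendsto (fun i => S (xs i) t r) l (𝓝 (S x t r)) := by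
  refine Metric.tendsto_nhds.2 fun η hη => ?_
  obtain ⟨δ, hδ, hclose⟩ := hS (ENNReal.ofReal η) (ENNReal.ofReal_pos.2 hη)
  filter_upwards [hconv.eventually_lt_const hδ] with i hi
  have hdist := hclose (xs i) (hxs i) (by rwa [hNorm_sub_comm])
  have hslice : hNorm O α (fun r => S x t r - S (xs i) t r) < ENNReal.ofReal η :=
    (le_iSup (fun s : Icc (0:ℝ) T => hNorm O α (fun r => S x s r - S (xs i) s r)) ⟨t, ht⟩).trans_lt
      hdist
  rw [Real.dist_eq, abs_sub_comm]
  exact (abs_le_toReal_hNorm (hslice.trans ENNReal.ofReal_lt_top).ne hr).trans_lt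
    (ENNReal.toReal_lt_of_lt_ofReal hslice)

variable {G : ℝ → ℝ → Euc d → Euc d → ℝ} {R F : ℝ → Euc d → ℝ → ℝ} {x : Euc d → ℝ}
  {f : ℝ → Euc d → ℝ}

lemma rateI_le {u : ℝ → Euc d → ℝ} (hu : MemL2 O T u) (hsol : SolvesCE O T G R F x u f) :
    rateI O T G R F x f ≤ 2⁻¹ * energy O T u :=
  sInf_le ⟨u, hu, hsol, rfl⟩

lemma exists_solvesCE_of_rateI_lt {c : ℝ≥0∞} (h : rateI O T G R F x f < c) :
    ∃ u, MemL2 O T u ∧ SolvesCE O T G R F x u f ∧ 2⁻¹ * energy O T u < c := by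
  obtain ⟨_, ⟨u, hu, hsol, rfl⟩, hlt⟩ := sInf_lt_iff.1 h
  exact ⟨u, hu, hsol, hlt⟩

lemma solvesCE_of_mapClusterPt {ι : Type*} {l : Filter ι}
    (hGzero : ∀ t s : ℝ, t ≤ s → ∀ r q : Euc d, G t s r q = 0)
    (hkernel : ∀ t ∈ Icc (0:ℝ) T, ∀ r ∈ O, MemLp
      (fun p : ℝ × Euc d => G t p.1 r p.2 * F p.1 p.2 (f p.1 p.2)) 2 (spaceTimeMeasure O T))
    {xs : ι → Euc d → ℝ} {us : ι → ℝ → Euc d → ℝ} (hus : ∀ i, MemL2 O T (us i))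
    (hsol : ∀ i, SolvesCE O T G R F (xs i) (us i) f)
    (hinit : ∀ t ∈ Icc (0:ℝ) T, ∀ r ∈ O, Tendsto (fun i => ∫ q in O, G t 0 r q * xs i q) l
      (𝓝 (∫ q in O, G t 0 r q * x q)))
    {v : Lp ℝ 2 (spaceTimeMeasure O T)}
    (hv : ∀ g, MapClusterPt (inner ℝ v g) l (fun i => inner ℝ ((hus i).memLp.toLp _) g)) :
    SolvesCE O T G R F x (fun s q => v (s, q)) f := by
  intro t ht r hr
  set g := (hkernel t ht r hr).toLp _
  set drift := ∫ s in Icc (0:ℝ) t, ∫ q in O, G t s r q * R s q (f s q)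
  have hcontrol : ∀ V : Lp ℝ 2 (spaceTimeMeasure O T),
      ∫ s in Icc (0:ℝ) t, ∫ q in O, G t s r q * F s q (f s q) * V (s, q) = inner ℝ V g :=
    fun V => by
      rw [real_inner_comm, inner_toLp_eq_setIntegral_setIntegral ht _
        fun s hts q => by simp [hGzero t s hts]]
  have hlim : Tendsto (fun i => inner ℝ ((hus i).memLp.toLp _) g) l
      (𝓝 (f t r - (∫ q in O, G t 0 r q * x q) - drift)) := by
    refine (((hinit t ht r hr).const_sub (f t r)).sub_const drift).congr fun i => ?_
    rw [← hcontrol, ← setIntegral_setIntegral_mul_congr_ae ht.2 _ _ (hus i).memLp.coeFn_toLp.symm,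
      hsol i t ht r hr]
    ring
  rw [hcontrol, eq_of_nhds_neBot (ClusterPt.mono (hv g) hlim).neBot]
  ring

end ControlledEquation

theorem stmt_9
    {d : ℕ} (O : Set (Euc d)) (hOopen : IsOpen O)
    (T K γ : ℝ) (hK : 0 < K) (hγ : (d : ℝ) < γ)
    (G : ℝ → ℝ → Euc d → Euc d → ℝ)
    (hGmeas : Measurable fun p : (ℝ × ℝ) × Euc d × Euc d => G p.1.1 p.1.2 p.2.1 p.2.2)
    (hGzero : ∀ t s : ℝ, t ≤ s → ∀ r q : Euc d, G t s r q = 0)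
    (hG1 : ∀ t ∈ Icc (0:ℝ) T, ∀ s ∈ Icc (0:ℝ) T, ∀ r ∈ O,
      (∫⁻ q in O, (‖G t s r q‖₊ : ℝ≥0∞)) ≤ ENNReal.ofReal K)
    (hG2 : ∀ s t : ℝ, 0 ≤ s → s < t → t ≤ T → ∀ r ∈ O, ∀ q ∈ O,
      |G t s r q| ≤ K * (t - s) ^ (-(d : ℝ) / γ))
    (R F : ℝ → Euc d → ℝ → ℝ)
    (hFmeas : Measurable fun p : ℝ × Euc d × ℝ => F p.1 p.2.1 p.2.2)
    (hGrowth : ∀ t ∈ Icc (0:ℝ) T, ∀ r ∈ O, ∀ x : ℝ,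
      |R t r x| + |F t r x| ≤ K * (1 + |x|))
    (α : ℝ) (hα0 : 0 < α)
    (hA2b : ∀ ξ : Euc d → ℝ, hNorm O α ξ ≠ ⊤ → ∀ ε : ℝ≥0∞, 0 < ε →
      ∃ δ : ℝ≥0∞, 0 < δ ∧ ∀ ξ' : Euc d → ℝ, hNorm O α ξ' ≠ ⊤ →
        hNorm O α (fun r => ξ r - ξ' r) < δ →
        distCB O α T (fun t r => ∫ q in O, G t 0 r q * ξ q)
          (fun t r => ∫ q in O, G t 0 r q * ξ' q) < ε)
    (f : ℝ → Euc d → ℝ) (hf : MemCB O α T f)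
    (x : Euc d → ℝ) (hx : hNorm O α x ≠ ⊤)
    (xn : ℕ → Euc d → ℝ) (hxn : ∀ n, hNorm O α (xn n) ≠ ⊤)
    (hconv : Tendsto (fun n => hNorm O α (fun r => xn n r - x r)) atTop (𝓝 0)) :
    rateI O T G R F x f ≤ Filter.liminf (fun n => rateI O T G R F (xn n) f) atTop := by
  have hO := hOopen.measurableSet
  have hkernel : ∀ t ∈ Icc (0:ℝ) T, ∀ r ∈ O, MemLp (fun p : ℝ × Euc d =>
      G t p.1 r p.2 * F p.1 p.2 (f p.1 p.2)) 2 (spaceTimeMeasure O T) := by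
    obtain ⟨B, hB⟩ := hf.exists_abs_comp_le hK.le fun t ht r hr y =>
      (le_add_of_nonneg_left (abs_nonneg _)).trans (hGrowth t ht r hr y)
    exact fun t ht r hr => memLp_kernel_mul hO hK.le hγ hGmeas hGzero hG1 hG2
      (hf.aestronglyMeasurable_comp hO hα0 hFmeas) hB ht hr
  refine ENNReal.le_of_forall_pos_le_add fun ε hε hL => ?_
  set c := liminf (fun n => rateI O T G R F (xn n) f) atTop + ε
  have hc : c ≠ ⊤ := by finiteness
  obtain ⟨φ, hφ, hlt⟩ := extraction_of_frequently_atTop (frequently_lt_of_liminf_lt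
    (by isBoundedDefault) (ENNReal.lt_add_right hL.ne (ENNReal.coe_ne_zero.2 hε.ne')))
  choose u hu hsol hcost using fun k => exists_solvesCE_of_rateI_lt (hlt k)
  have hnorm : ∀ k, ‖(hu k).memLp.toLp _‖ ≤ √(2 * c).toReal := fun k =>
    (inv_two_mul_ofReal_sq_le_iff (norm_nonneg _) hc).1
      (energy_eq_ofReal_norm_toLp_sq (hu k) ▸ (hcost k).le)
  obtain ⟨v, hv, hcluster⟩ := exists_mapClusterPt_inner_of_norm_le (l := atTop) hnorm
  have hsolv := solvesCE_of_mapClusterPt hGzero hkernel hu hsol (fun t ht r hr =>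
    (tendsto_apply_of_distCB_continuousAt (S := fun ξ t r => ∫ q in O, G t 0 r q * ξ q)
      (hA2b x hx) hxn hconv ht hr).comp hφ.tendsto_atTop) hcluster
  calc rateI O T G R F x f ≤ 2⁻¹ * energy O T (fun s q => v (s, q)) := rateI_le (Lp.memLp v) hsolv
    _ ≤ c := energy_coeFn_eq v ▸ (inv_two_mul_ofReal_sq_le_iff (norm_nonneg _) hc).2 hv

end
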